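/- arXiv:2304.12585 — 2 statements merged into one kernel-verified Lean document; each statement's English description precedes it below -/
import Mathlib

section
/- Let N be a positive integer, let X and Y_1, …, Y_N be N+1 mutually independent nonnegative real-valued random variables, and let a > 0 be a real constant. Then E[ln(1 + X / (Σ_{i=1}^N Y_i + a))] = ∫_0^∞ (e^{−a z}/z) · (1 − E[e^{−z X}]) · ∏_{i=1}^N E[e^{−z Y_i}] dz, where the integral is the Lebesgue integral over (0, ∞). -/
/-!
Frullani's integral gives `log (c / b) = ∫₀^∞ (e^{-zb} - e^{-zc}) / z dz` for `0 < b ≤ c`.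
Taking `b = V`, `c = U + V` and integrating over `ω`, Tonelli's theorem (the integrand is
nonnegative) exchanges the two integrals, so that
`E[log (1 + U / V)] = ∫₀^∞ (E[e^{-zV}] - E[e^{-z(U+V)}]) / z dz`.
For `U = X` and `V = ∑ Yᵢ + a`, independence factors both Laplace transforms into products of
the individual ones, and the constant `a` contributes the factor `e^{-az}`.
-/

open MeasureTheory ProbabilityTheory Set Real Filter Topology

section Frullani

variable {b c : ℝ}

lemma exp_neg_mul_sub_exp_neg_mul_div_nonneg (hbc : b ≤ c) (z : ℝ) :
    0 ≤ (exp (-z * b) - exp (-z * c)) / z := by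
  rcases le_total 0 z with hz | hz
  · exact div_nonneg (sub_nonneg.2 (exp_le_exp.2 (by nlinarith))) hz
  · exact div_nonneg_of_nonpos (sub_nonpos.2 (exp_le_exp.2 (by nlinarith))) hz

/-- The integrand is dominated by `(c - b) * exp (-z * b)`, since `1 - exp (-y) ≤ y`. -/
lemma integrableOn_exp_neg_mul_sub_exp_neg_mul_div (hb : 0 < b) (hbc : b ≤ c) :
    IntegrableOn (fun z ↦ (exp (-z * b) - exp (-z * c)) / z) (Ioi 0) := by
  have hdom : IntegrableOn (fun z ↦ (c - b) * exp (-b * z)) (Ioi 0) :=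
    (exp_neg_integrableOn_Ioi 0 hb).const_mul (c - b)
  refine hdom.mono' (by fun_prop : Measurable _).aestronglyMeasurable
    ((ae_restrict_iff' measurableSet_Ioi).2 (ae_of_all _ fun z (hz : 0 < z) ↦ ?_))
  rw [norm_of_nonneg (exp_neg_mul_sub_exp_neg_mul_div_nonneg hbc z), div_le_iff₀ hz]
  have hexp := add_one_le_exp (-z * (c - b))
  have hsplit : exp (-z * c) = exp (-z * b) * exp (-z * (c - b)) := by
    rw [← exp_add]; ring_nf
  rw [show -b * z = -z * b by ring]
  nlinarith [exp_pos (-z * b)]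

theorem integral_exp_neg_mul_sub_exp_neg_mul_div (hb : 0 < b) (hbc : b ≤ c) :
    ∫ z in Ioi 0, (exp (-z * b) - exp (-z * c)) / z = log (c / b) := by
  have hc : 0 < c := hb.trans_le hbc
  have hform : (fun z : ℝ ↦ (exp (-z * b) - exp (-z * c)) / z) =
      fun z ↦ z⁻¹ • ((fun y ↦ exp (-y)) (b * z) - (fun y ↦ exp (-y)) (c * z)) := by
    ext z; simp only [smul_eq_mul, neg_mul, mul_comm z]; ring
  have hcont : Continuous fun y : ℝ ↦ exp (-y) := by fun_prop
  have h := Frullani.integral_Ioi_eq (f := fun y ↦ exp (-y)) (L := 1) (R := 0)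
    (hcont.locallyIntegrable.locallyIntegrableOn _) hb hc
    (by simpa using (hcont.tendsto 0).mono_left nhdsWithin_le_nhds)
    tendsto_exp_neg_atTop_nhds_zero
    (hform ▸ integrableOn_exp_neg_mul_sub_exp_neg_mul_div hb hbc)
  rw [hform, h, sub_zero, smul_eq_mul, mul_one]

end Frullani

section Tonelli

variable {α β : Type*} [MeasurableSpace α] [MeasurableSpace β] {μ : Measure α} {ν : Measure β}
  {f : α → β → ℝ}

lemma integral_integral_eq_toReal_lintegral_lintegral [SFinite ν]
    (hf : Measurable (Function.uncurry f)) (hf0 : ∀ x y, 0 ≤ f x y)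
    (hfx : ∀ᵐ x ∂μ, Integrable (f x) ν) :
    ∫ x, ∫ y, f x y ∂ν ∂μ = (∫⁻ x, ∫⁻ y, ENNReal.ofReal (f x y) ∂ν ∂μ).toReal := by
  rw [integral_eq_lintegral_of_nonneg_ae (ae_of_all _ fun x ↦ integral_nonneg (hf0 x))
    hf.stronglyMeasurable.integral_prod_right.aestronglyMeasurable]
  congr 1
  refine lintegral_congr_ae (hfx.mono fun x hx ↦ ?_)
  exact ofReal_integral_eq_lintegral_ofReal hx (ae_of_all _ (hf0 x))

/-- Without integrable sections an inner Bochner integral could take the junk value `0`. -/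
theorem integral_integral_swap_of_nonneg [SFinite μ] [SFinite ν]
    (hf : Measurable (Function.uncurry f)) (hf0 : ∀ x y, 0 ≤ f x y)
    (hfx : ∀ᵐ x ∂μ, Integrable (f x) ν) (hfy : ∀ᵐ y ∂ν, Integrable (fun x ↦ f x y) μ) :
    ∫ x, ∫ y, f x y ∂ν ∂μ = ∫ y, ∫ x, f x y ∂μ ∂ν := by
  rw [integral_integral_eq_toReal_lintegral_lintegral hf hf0 hfx,
    integral_integral_eq_toReal_lintegral_lintegral (f := fun y x ↦ f x y)
      (hf.comp measurable_swap) (fun y x ↦ hf0 x y) hfy,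
    lintegral_lintegral_swap (hf.ennreal_ofReal.aemeasurable)]

end Tonelli

lemma integrable_exp_neg_mul_of_nonneg {Ω : Type*} [MeasurableSpace Ω] {μ : Measure Ω}
    [IsFiniteMeasure μ] {V : Ω → ℝ} (hV : Measurable V) (hV0 : ∀ ω, 0 ≤ V ω) {z : ℝ}
    (hz : 0 ≤ z) : Integrable (fun ω ↦ exp (-z * V ω)) μ :=
  .of_mem_Icc 0 1 (by fun_prop) (ae_of_all _ fun ω ↦
    ⟨(exp_pos _).le, exp_le_one_iff.2 (by nlinarith [hV0 ω])⟩)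

theorem integral_log_one_add_div_eq_integral_mgf {Ω : Type*} [MeasurableSpace Ω]
    {μ : Measure Ω} [IsFiniteMeasure μ] {U V : Ω → ℝ} (hU : Measurable U) (hV : Measurable V)
    (hU0 : ∀ ω, 0 ≤ U ω) (hV0 : ∀ ω, 0 < V ω) :
    ∫ ω, log (1 + U ω / V ω) ∂μ =
      ∫ z in Ioi 0, (mgf V μ (-z) - mgf (U + V) μ (-z)) / z := by
  have hle : ∀ ω, V ω ≤ U ω + V ω := fun ω ↦ le_add_of_nonneg_left (hU0 ω)
  have hint : ∀ z, 0 < z → Integrable (fun ω ↦ exp (-z * V ω)) μ ∧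
      Integrable (fun ω ↦ exp (-z * (U + V) ω)) μ := fun z hz ↦
    ⟨integrable_exp_neg_mul_of_nonneg hV (fun ω ↦ (hV0 ω).le) hz.le,
      integrable_exp_neg_mul_of_nonneg (hU.add hV) (fun ω ↦ (hV0 ω).le.trans (hle ω)) hz.le⟩
  calc ∫ ω, log (1 + U ω / V ω) ∂μ
      = ∫ ω, (∫ z in Ioi 0, (exp (-z * V ω) - exp (-z * (U ω + V ω))) / z) ∂μ := by
        congr 1 with ω
        rw [integral_exp_neg_mul_sub_exp_neg_mul_div (hV0 ω) (hle ω), add_div,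
          div_self (hV0 ω).ne', add_comm]
    _ = ∫ z in Ioi 0, ∫ ω, (exp (-z * V ω) - exp (-z * (U ω + V ω))) / z ∂μ :=
        integral_integral_swap_of_nonneg (by fun_prop)
          (fun ω z ↦ exp_neg_mul_sub_exp_neg_mul_div_nonneg (hle ω) z)
          (ae_of_all _ fun ω ↦ integrableOn_exp_neg_mul_sub_exp_neg_mul_div (hV0 ω) (hle ω))
          ((ae_restrict_iff' measurableSet_Ioi).2 (ae_of_all _ fun z hz ↦
            ((hint z hz).1.sub (hint z hz).2).div_const z))
    _ = ∫ z in Ioi 0, (mgf V μ (-z) - mgf (U + V) μ (-z)) / z := by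
        refine setIntegral_congr_fun measurableSet_Ioi fun z hz ↦ ?_
        rw [integral_div]
        exact congrArg (· / z) (integral_sub (hint z hz).1 (hint z hz).2)

theorem ProbabilityTheory.iIndepFun.mgf_add_sum {Ω : Type*} [MeasurableSpace Ω]
    {μ : Measure Ω} {n : ℕ} {X : Ω → ℝ} {Y : Fin n → Ω → ℝ}
    (h : iIndepFun (Fin.cons X Y : Fin (n + 1) → Ω → ℝ) μ)
    (hX : Measurable X) (hY : ∀ i, Measurable (Y i)) (t : ℝ) :
    mgf (X + ∑ i, Y i) μ t = mgf X μ t * ∏ i, mgf (Y i) μ t := by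
  have h_meas : ∀ i, Measurable ((Fin.cons X Y : Fin (n + 1) → Ω → ℝ) i) :=
    Fin.cases hX hY
  simpa [Fin.sum_univ_succ, Fin.prod_univ_succ] using h.mgf_sum h_meas Finset.univ

theorem stmt_0_general {Ω : Type*} [MeasureSpace Ω] [IsProbabilityMeasure (ℙ : Measure Ω)]
    (N : ℕ) (X : Ω → ℝ) (Y : Fin N → Ω → ℝ) (a : ℝ) (ha : 0 < a)
    (hX : Measurable X) (hY : ∀ i, Measurable (Y i))
    (hXnn : ∀ ω, 0 ≤ X ω) (hYnn : ∀ i ω, 0 ≤ Y i ω)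
    (hindep : iIndepFun (Fin.cons X Y : Fin (N + 1) → Ω → ℝ) ℙ) :
    (∫ ω, Real.log (1 + X ω / (∑ i, Y i ω + a))) =
      ∫ z in Ioi (0 : ℝ), Real.exp (-a * z) / z *
        ((1 - ∫ ω, Real.exp (-(z * X ω))) * ∏ i, ∫ ω, Real.exp (-(z * Y i ω))) := by
  have hV : ∀ ω, 0 < ∑ i, Y i ω + a := fun ω ↦
    add_pos_of_nonneg_of_pos (Finset.sum_nonneg fun i _ ↦ hYnn i ω) ha
  rw [integral_log_one_add_div_eq_integral_mgf hX (by fun_prop) hXnn hV]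
  refine setIntegral_congr_fun measurableSet_Ioi fun z _ ↦ ?_
  have hV_eq : (fun ω ↦ ∑ i, Y i ω + a) = fun ω ↦ (∑ i, Y i) ω + a := by
    simp only [Finset.sum_apply]
  have hUV_eq : X + (fun ω ↦ ∑ i, Y i ω + a) = fun ω ↦ (X + ∑ i, Y i) ω + a := by
    ext ω; simp only [Pi.add_apply, Finset.sum_apply, add_assoc]
  have hYindep : iIndepFun Y ℙ := by
    simpa only [Fin.cons_succ] using hindep.precomp (Fin.succ_injective N)
  rw [hUV_eq, hV_eq, mgf_add_const, mgf_add_const, hindep.mgf_add_sum hX hY,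
    hYindep.mgf_sum hY]
  simp only [mgf, neg_mul, mul_comm a z]
  ring

/-- Lemma 1 of the paper (Hamdi's integral identity): let `X, Y_1, …, Y_N` be `N + 1`
mutually independent nonnegative real random variables and `a > 0`. Then
`E[ln(1 + X/(Σ_i Y_i + a))]
  = ∫_0^∞ (e^{−a z}/z) (1 − E[e^{−z X}]) ∏_{i=1}^N E[e^{−z Y_i}] dz`. -/
theorem stmt_0 {Ω : Type*} [MeasureSpace Ω] [IsProbabilityMeasure (ℙ : Measure Ω)]
    (N : ℕ) (hN : 0 < N) (X : Ω → ℝ) (Y : Fin N → Ω → ℝ) (a : ℝ) (ha : 0 < a)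
    (hX : Measurable X) (hY : ∀ i, Measurable (Y i))
    (hXnn : ∀ ω, 0 ≤ X ω) (hYnn : ∀ i ω, 0 ≤ Y i ω)
    (hindep : iIndepFun (Fin.cons X Y : Fin (N + 1) → Ω → ℝ) ℙ) :
    (∫ ω, Real.log (1 + X ω / (∑ i, Y i ω + a))) =
      ∫ z in Ioi (0 : ℝ), Real.exp (-a * z) / z *
        ((1 - ∫ ω, Real.exp (-(z * X ω))) * ∏ i, ∫ ω, Real.exp (-(z * Y i ω))) :=
  stmt_0_general N X Y a ha hX hY hXnn hYnn hindep
end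

section
/- Fix a positive integer K, a positive integer m, real snr > 0, distances d_{k,ℓ} > 0 and path-loss exponents β_{k,ℓ} > 0, a scheduling action a ∈ {0,1}^K, and an index k ∈ {1,…,K}. Let G_k have the Gamma distribution with shape m and rate m and let E_{k,ℓ}, ℓ ≠ k, have exponential distribution of rate 1, all mutually independent. Then the ergodic spectral efficiency of link k, R_k(a) := E[log₂(1 + G_k d_{k,k}^{−β_{k,k}} a_k / (Σ_{ℓ≠k} E_{k,ℓ} d_{k,ℓ}^{−β_{k,ℓ}} a_ℓ + 1/snr))], equals log₂(e) · a_k · ∫_0^∞ (e^{−z/snr}/z) · (1 − (1 + z d_{k,k}^{−β_{k,k}}/m)^{−m}) · ∏_{ℓ≠k} (1 + z d_{k,ℓ}^{−β_{k,ℓ}})^{−a_ℓ} dz. -/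
/-!
Frullani's integral gives `log (q / p) = ∫₀^∞ (e^{-pz} - e^{-qz}) / z dz` for `0 < p ≤ q`. With
`p = Y + c` and `q = X + Y + c` this writes `log (1 + X / (Y + c))` as an integral over `z`;
integrating over `ω` and exchanging the integrals (Tonelli: everything is nonnegative) expresses
the ergodic rate through the Laplace transforms `E e^{-zY}` and `E e^{-z(X+Y)}` (Hamdi's identity).
For independent powers these factor, and the Laplace transform of a Gamma(a, r) variable is
`(1 + z / r)^{-a}`.
-/

open MeasureTheory ProbabilityTheory Set Finset

lemma lintegral_exp_neg_mul_Ioi {t : ℝ} (ht : 0 < t) :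
    ∫⁻ z in Ioi (0 : ℝ), ENNReal.ofReal (Real.exp (-(t * z))) = ENNReal.ofReal t⁻¹ := by
  have hint : IntegrableOn (fun z : ℝ => Real.exp (-t * z)) (Ioi 0) :=
    integrableOn_exp_mul_Ioi (neg_lt_zero.mpr ht) 0
  simp_rw [← neg_mul]
  rw [← ofReal_integral_eq_lintegral_ofReal hint (ae_of_all _ fun _ => (Real.exp_pos _).le),
    integral_exp_mul_Ioi (neg_lt_zero.mpr ht)]
  simp [neg_div, one_div]

lemma lintegral_exp_neg_mul_Ioc {p q z : ℝ} (hpq : p ≤ q) (hz : z ≠ 0) :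
    ∫⁻ t in Ioc p q, ENNReal.ofReal (Real.exp (-(t * z))) =
      ENNReal.ofReal ((Real.exp (-(p * z)) - Real.exp (-(q * z))) / z) := by
  have hcont : Continuous fun t : ℝ => Real.exp (-(t * z)) := by fun_prop
  rw [← ofReal_integral_eq_lintegral_ofReal hcont.integrableOn_Ioc
    (ae_of_all _ fun _ => (Real.exp_pos _).le), ← intervalIntegral.integral_of_le hpq]
  congr 1
  have h := intervalIntegral.integral_comp_mul_left Real.exp (neg_ne_zero.mpr hz) (a := p) (b := q)
  simp only [integral_exp, smul_eq_mul] at h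
  simp_rw [neg_mul_eq_mul_neg, mul_comm _ (-z)]
  rw [h]
  field_simp
  ring

theorem lintegral_exp_sub_exp_div_Ioi {p q : ℝ} (hp : 0 < p) (hpq : p ≤ q) :
    ∫⁻ z in Ioi (0 : ℝ), ENNReal.ofReal ((Real.exp (-(p * z)) - Real.exp (-(q * z))) / z) =
      ENNReal.ofReal (Real.log (q / p)) := by
  have hinv : ContinuousOn (fun t : ℝ => t⁻¹) (Icc p q) :=
    continuousOn_inv₀.mono fun t ht => (hp.trans_le ht.1).ne'
  calc ∫⁻ z in Ioi (0 : ℝ), ENNReal.ofReal ((Real.exp (-(p * z)) - Real.exp (-(q * z))) / z)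
      = ∫⁻ z in Ioi (0 : ℝ), ∫⁻ t in Ioc p q, ENNReal.ofReal (Real.exp (-(t * z))) :=
        setLIntegral_congr_fun measurableSet_Ioi fun z hz =>
          (lintegral_exp_neg_mul_Ioc hpq (ne_of_gt hz)).symm
    _ = ∫⁻ t in Ioc p q, ∫⁻ z in Ioi (0 : ℝ), ENNReal.ofReal (Real.exp (-(t * z))) :=
        lintegral_lintegral_swap (by fun_prop)
    _ = ∫⁻ t in Ioc p q, ENNReal.ofReal t⁻¹ :=
        setLIntegral_congr_fun measurableSet_Ioc fun t ht =>
          lintegral_exp_neg_mul_Ioi (hp.trans ht.1)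
    _ = ENNReal.ofReal (Real.log (q / p)) := by
        rw [← ofReal_integral_eq_lintegral_ofReal
          (hinv.integrableOn_Icc.mono_set Ioc_subset_Icc_self)
          ((ae_restrict_iff' measurableSet_Ioc).mpr <| ae_of_all _ fun t ht =>
            (inv_pos.mpr (hp.trans ht.1)).le),
          ← intervalIntegral.integral_of_le hpq, integral_inv_of_pos hp (hp.trans_le hpq)]

lemma mgf_id_gammaMeasure {a r t : ℝ} (ha : 0 < a) (hr : 0 < r) (ht : t < r) :
    mgf id (gammaMeasure a r) t = (1 - t / r) ^ (-a) := by
  have hrt : 0 < r - t := by linarith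
  rw [mgf, gammaMeasure, show gammaPDF a r = fun x => ENNReal.ofReal (gammaPDFReal a r x) from rfl,
    integral_withDensity_eq_integral_toReal_smul (measurable_gammaPDFReal a r).ennreal_ofReal
      (ae_of_all _ fun _ => ENNReal.ofReal_lt_top),
    ← setIntegral_eq_integral_of_forall_compl_eq_zero (s := Ici 0) fun x hx => by
      simp [gammaPDFReal, show ¬ 0 ≤ x from hx], integral_Ici_eq_integral_Ioi]
  calc ∫ x in Ioi 0, (ENNReal.ofReal (gammaPDFReal a r x)).toReal • Real.exp (t * id x)
      = ∫ x in Ioi 0, r ^ a / Real.Gamma a * (x ^ (a - 1) * Real.exp (-((r - t) * x))) := by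
        refine setIntegral_congr_fun measurableSet_Ioi fun x (hx : 0 < x) => ?_
        rw [ENNReal.toReal_ofReal (gammaPDFReal_nonneg ha hr x), gammaPDFReal, if_pos hx.le,
          smul_eq_mul, id, show -((r - t) * x) = -(r * x) + t * x by ring, Real.exp_add]
        ring
    _ = (1 - t / r) ^ (-a) := by
        have hΓ : Real.Gamma a ≠ 0 := (Real.Gamma_pos_of_pos ha).ne'
        rw [integral_const_mul, Real.integral_rpow_mul_exp_neg_mul_Ioi ha hrt,
          show 1 - t / r = (r - t) / r by field_simp, Real.rpow_neg (by positivity),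
          Real.div_rpow hrt.le hr.le, Real.div_rpow zero_le_one hrt.le, Real.one_rpow]
        field_simp

section Laplace

variable {Ω : Type*} [MeasurableSpace Ω] {μ : Measure Ω} {X Y : Ω → ℝ}

lemma mgf_of_map_eq_gammaMeasure (hX : Measurable X) {a r t : ℝ}
    (h : μ.map X = gammaMeasure a r) (ha : 0 < a) (hr : 0 < r) (ht : t < r) :
    mgf X μ t = (1 - t / r) ^ (-a) := by
  rw [← mgf_id_map hX.aemeasurable, h, mgf_id_gammaMeasure ha hr ht]

lemma mgf_neg_mul_of_map_eq_gammaMeasure (hX : Measurable X) {a r s z : ℝ}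
    (h : μ.map X = gammaMeasure a r) (ha : 0 < a) (hr : 0 < r) (hs : 0 ≤ s) (hz : 0 ≤ z) :
    mgf X μ (-(s * z)) = (1 + s * z / r) ^ (-a) := by
  rw [mgf_of_map_eq_gammaMeasure hX h ha hr (by nlinarith), neg_div, sub_neg_eq_add]

lemma ae_nonneg_of_map_eq_gammaMeasure (hX : Measurable X) {a r : ℝ}
    (h : μ.map X = gammaMeasure a r) : 0 ≤ᵐ[μ] X := by
  have h0 : μ (X ⁻¹' Iio 0) = 0 := by
    rw [← Measure.map_apply hX measurableSet_Iio, h, gammaMeasure,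
      withDensity_apply _ measurableSet_Iio, lintegral_gammaPDF_of_nonpos le_rfl]
  filter_upwards [measure_eq_zero_iff_ae_notMem.mp h0] with ω hω
  simpa using hω

lemma measurable_mgf [SFinite μ] (hX : Measurable X) : Measurable (mgf X μ) :=
  (StronglyMeasurable.integral_prod_right' (f := fun p : ℝ × Ω => Real.exp (p.1 * X p.2))
    (by fun_prop)).measurable

lemma integrable_exp_mul_of_nonpos [IsFiniteMeasure μ] (hX : Measurable X) (hX0 : 0 ≤ᵐ[μ] X)
    {t : ℝ} (ht : t ≤ 0) : Integrable (fun ω => Real.exp (t * X ω)) μ :=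
  .of_bound (by fun_prop) 1 <| by
    filter_upwards [hX0] with ω hω
    rw [Real.norm_of_nonneg (Real.exp_pos _).le, Real.exp_le_one_iff]
    exact mul_nonpos_of_nonpos_of_nonneg ht hω

lemma lintegral_exp_sub_exp_div_eq_mgf_sub [IsFiniteMeasure μ] (hX : Measurable X)
    (hY : Measurable Y) (hX0 : 0 ≤ᵐ[μ] X) (hY0 : 0 ≤ᵐ[μ] Y) (c : ℝ) {z : ℝ} (hz : 0 < z) :
    ∫⁻ ω, ENNReal.ofReal
        ((Real.exp (-((Y ω + c) * z)) - Real.exp (-((X ω + Y ω + c) * z))) / z) ∂μ =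
      ENNReal.ofReal (Real.exp (-(c * z)) / z * (mgf Y μ (-z) - mgf (X + Y) μ (-z))) := by
  have hXY0 : 0 ≤ᵐ[μ] X + Y := by
    filter_upwards [hX0, hY0] with ω (h1 : 0 ≤ X ω) (h2 : 0 ≤ Y ω) using add_nonneg h1 h2
  have hintY := integrable_exp_mul_of_nonpos hY hY0 (neg_nonpos.mpr hz.le)
  have hintXY := integrable_exp_mul_of_nonpos (hX.add hY) hXY0 (neg_nonpos.mpr hz.le)
  have hint : Integrable (fun ω => Real.exp (-z * Y ω) - Real.exp (-z * (X + Y) ω)) μ :=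
    hintY.sub hintXY
  have hsplit : ∀ ω, (Real.exp (-((Y ω + c) * z)) - Real.exp (-((X ω + Y ω + c) * z))) / z =
      Real.exp (-(c * z)) / z * (Real.exp (-z * Y ω) - Real.exp (-z * (X + Y) ω)) := by
    intro ω
    simp only [Pi.add_apply, mul_sub, ← mul_div_right_comm, ← Real.exp_add]
    ring_nf
  simp_rw [hsplit]
  rw [← ofReal_integral_eq_lintegral_ofReal (hint.const_mul _), integral_const_mul,
    integral_sub hintY hintXY]
  · rfl
  · filter_upwards [hX0] with ω (hω : 0 ≤ X ω)
    refine mul_nonneg (div_nonneg (Real.exp_pos _).le hz.le) (sub_nonneg.mpr ?_)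
    simp only [Pi.add_apply, Real.exp_le_exp]
    nlinarith

/-- Hamdi's identity. If either side is not integrable, both are the junk value `0`: the two
integrands are nonnegative with equal `lintegral`s. -/
theorem integral_log_one_add_div_add_eq [IsFiniteMeasure μ] (hX : Measurable X)
    (hY : Measurable Y) (hX0 : 0 ≤ᵐ[μ] X) (hY0 : 0 ≤ᵐ[μ] Y) {c : ℝ} (hc : 0 < c) :
    ∫ ω, Real.log (1 + X ω / (Y ω + c)) ∂μ =
      ∫ z in Ioi 0, Real.exp (-(c * z)) / z * (mgf Y μ (-z) - mgf (X + Y) μ (-z)) := by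
  have hpos : ∀ᵐ ω ∂μ, 0 < Y ω + c ∧ Y ω + c ≤ X ω + Y ω + c := by
    filter_upwards [hX0, hY0] with ω (h1 : 0 ≤ X ω) (h2 : 0 ≤ Y ω)
      using ⟨by linarith, by linarith⟩
  have hfrullani : ∀ᵐ ω ∂μ, ENNReal.ofReal (Real.log (1 + X ω / (Y ω + c))) =
      ∫⁻ z in Ioi (0 : ℝ), ENNReal.ofReal
        ((Real.exp (-((Y ω + c) * z)) - Real.exp (-((X ω + Y ω + c) * z))) / z) := by
    filter_upwards [hpos] with ω ⟨hP, hPQ⟩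
    rw [lintegral_exp_sub_exp_div_Ioi hP hPQ]
    congr 2
    field_simp
    ring
  have hmgf_anti : ∀ z ∈ Ioi (0 : ℝ), mgf (X + Y) μ (-z) ≤ mgf Y μ (-z) := fun z (hz : 0 < z) =>
    mgf_anti_of_nonpos (by filter_upwards [hX0] with ω (hω : 0 ≤ X ω) using by simp [hω])
      (neg_nonpos.mpr hz.le) (integrable_exp_mul_of_nonpos hY hY0 (neg_nonpos.mpr hz.le))
  rw [integral_eq_lintegral_of_nonneg_ae, integral_eq_lintegral_of_nonneg_ae,
    lintegral_congr_ae hfrullani, lintegral_lintegral_swap (by fun_prop),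
    setLIntegral_congr_fun measurableSet_Ioi fun z hz =>
      lintegral_exp_sub_exp_div_eq_mgf_sub hX hY hX0 hY0 c hz]
  · exact (ae_restrict_iff' measurableSet_Ioi).mpr <| ae_of_all _ fun z (hz : 0 < z) =>
      mul_nonneg (div_nonneg (Real.exp_pos _).le hz.le) (sub_nonneg.mpr (hmgf_anti z hz))
  · have := measurable_mgf (μ := μ) hY
    have := measurable_mgf (μ := μ) (hX.add hY)
    fun_prop
  · filter_upwards [hX0, hpos] with ω (hω : 0 ≤ X ω) hP
    exact Real.log_nonneg (le_add_of_nonneg_right (div_nonneg hω hP.1.le))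
  · exact (Real.measurable_log.comp (by fun_prop)).aestronglyMeasurable

end Laplace

theorem ProbabilityTheory.iIndepFun.integral_log_one_add_div_sum_add_eq {Ω ι : Type*}
    [MeasurableSpace Ω] {μ : Measure Ω} [Fintype ι] [DecidableEq ι] {X : ι → Ω → ℝ}
    (hX : iIndepFun X μ) (hXm : ∀ i, Measurable (X i))
    (hX0 : ∀ i, 0 ≤ᵐ[μ] X i) {w : ι → ℝ} (hw : ∀ i, 0 ≤ w i) (k : ι) {c : ℝ} (hc : 0 < c) :
    ∫ ω, Real.log (1 + w k * X k ω / (∑ i ∈ univ.erase k, w i * X i ω + c)) ∂μ =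
      ∫ z in Ioi 0, Real.exp (-(c * z)) / z *
        ((1 - mgf (X k) μ (-(w k * z))) * ∏ i ∈ univ.erase k, mgf (X i) μ (-(w i * z))) := by
  have := hX.isProbabilityMeasure
  set V : ι → Ω → ℝ := fun i ω => w i * X i ω
  have hV : iIndepFun V μ := hX.comp (fun i x => w i * x) fun i => by fun_prop
  have hVm : ∀ i, Measurable (V i) := fun i => (hXm i).const_mul _
  have hV0 : ∀ i, 0 ≤ᵐ[μ] V i := fun i => by
    filter_upwards [hX0 i] with ω (hω : 0 ≤ X i ω) using mul_nonneg (hw i) hω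
  have hY0 : 0 ≤ᵐ[μ] ∑ i ∈ univ.erase k, V i := by
    filter_upwards [ae_all_iff.mpr hV0] with ω hω
    show 0 ≤ (∑ i ∈ univ.erase k, V i) ω
    simpa only [Finset.sum_apply] using sum_nonneg fun i _ => hω i
  have h := integral_log_one_add_div_add_eq (hVm k) (by fun_prop) (hV0 k) hY0 hc
  simp only [Finset.sum_apply] at h
  rw [h]
  refine setIntegral_congr_fun measurableSet_Ioi fun z _ => ?_
  rw [add_sum_erase _ _ (mem_univ k), hV.mgf_sum hVm, hV.mgf_sum hVm,
    ← mul_prod_erase _ _ (mem_univ k)]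
  simp only [V, mgf_const_mul, mul_neg]
  ring

theorem stmt_3_general {Ω : Type*} [MeasureSpace Ω] [IsProbabilityMeasure (ℙ : Measure Ω)]
    (K : ℕ) (m : ℕ) (hm : 0 < m) (snr : ℝ) (hsnr : 0 < snr)
    (d β : Fin K → Fin K → ℝ) (hd : ∀ k l, 0 < d k l)
    (a : Fin K → ℝ) (ha : ∀ k, a k = 0 ∨ a k = 1) (k : Fin K)
    (G : Ω → ℝ) (E : Fin K → Ω → ℝ)
    (hGmeas : Measurable G) (hEmeas : ∀ l, Measurable (E l))
    (hG : Measure.map G ℙ = gammaMeasure m m)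
    (hE : ∀ l, l ≠ k → Measure.map (E l) ℙ = expMeasure 1)
    (hindep : iIndepFun (Function.update E k G) ℙ) :
    (∫ ω, Real.logb 2 (1 + G ω * d k k ^ (-β k k) * a k /
        (∑ l ∈ univ.erase k, E l ω * d k l ^ (-β k l) * a l + 1 / snr))) =
      Real.logb 2 (Real.exp 1) * a k *
        ∫ z in Ioi (0 : ℝ), Real.exp (-z / snr) / z *
          ((1 - (1 + z * d k k ^ (-β k k) / m) ^ (-(m : ℝ))) *
            ∏ l ∈ univ.erase k, (1 + z * d k l ^ (-β k l)) ^ (-a l)) := by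
  rcases ha k with hak | hak
  · simp [hak]
  set X := Function.update E k G
  set w : Fin K → ℝ := fun l => d k l ^ (-β k l) * a l
  have hXk : X k = G := Function.update_self k G E
  have hXl : ∀ l ∈ univ.erase k, X l = E l := fun l hl =>
    Function.update_of_ne (ne_of_mem_erase hl) G E
  have hX : ∀ l, Measurable (X l) ∧ 0 ≤ᵐ[ℙ] X l := fun l => by
    rcases eq_or_ne l k with rfl | hl
    · simpa [X] using ⟨hGmeas, ae_nonneg_of_map_eq_gammaMeasure hGmeas hG⟩
    · simpa [X, hl] using ⟨hEmeas l, ae_nonneg_of_map_eq_gammaMeasure (hEmeas l) (hE l hl)⟩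
  have hw : ∀ l, 0 ≤ w l := fun l =>
    mul_nonneg (Real.rpow_nonneg (hd k l).le _) (by rcases ha l with h | h <;> simp [h])
  have hsinr : ∀ ω, 1 + G ω * d k k ^ (-β k k) * a k /
      (∑ l ∈ univ.erase k, E l ω * d k l ^ (-β k l) * a l + 1 / snr) =
        1 + w k * X k ω / (∑ l ∈ univ.erase k, w l * X l ω + 1 / snr) := fun ω => by
    rw [hXk, sum_congr rfl fun l hl =>
      show w l * X l ω = E l ω * d k l ^ (-β k l) * a l by rw [hXl l hl]; ring]
    simp only [w, hak]
    ring
  have hinterf : ∀ z, 0 ≤ z → ∀ l ∈ univ.erase k,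
      mgf (X l) ℙ (-(w l * z)) = (1 + z * d k l ^ (-β k l)) ^ (-a l) := fun z hz l hl => by
    rw [hXl l hl, mgf_neg_mul_of_map_eq_gammaMeasure (hEmeas l) (hE l (ne_of_mem_erase hl))
      one_pos one_pos (hw l) hz]
    -- `(1 + a x)⁻¹ = (1 + x) ^ (-a)` because `a ∈ {0, 1}`
    rcases ha l with h | h <;> simp [w, h, mul_comm]
  have hm' : (0 : ℝ) < m := by exact_mod_cast hm
  simp_rw [Real.logb, hsinr]
  rw [integral_div, hindep.integral_log_one_add_div_sum_add_eq (fun l => (hX l).1)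
    (fun l => (hX l).2) hw k (by positivity), hak, Real.log_exp, mul_one, one_div_mul_eq_div]
  congr 1
  refine setIntegral_congr_fun measurableSet_Ioi fun z (hz : 0 < z) => ?_
  rw [hXk, mgf_neg_mul_of_map_eq_gammaMeasure hGmeas hG hm' hm' (hw k) hz.le,
    prod_congr rfl (hinterf z hz.le), show -(1 / snr * z) = -z / snr by ring]
  simp only [w, hak]
  ring_nf

/-- Per-link identity in the proof of Theorem 1 (Appendix A): with Gamma(m, m) desired
fading power `G`, unit-rate exponential interfering fading powers `E ℓ` (`ℓ ≠ k`), all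
mutually independent, the ergodic spectral efficiency of link `k` under scheduling action
`a ∈ {0,1}^K` equals
`log₂(e) · a_k ∫_0^∞ (e^{−z/snr}/z)(1 − (1 + z d_{kk}^{−β_{kk}}/m)^{−m})
  ∏_{ℓ≠k} (1 + z d_{kℓ}^{−β_{kℓ}})^{−a_ℓ} dz`. -/
theorem stmt_3 {Ω : Type*} [MeasureSpace Ω] [IsProbabilityMeasure (ℙ : Measure Ω)]
    (K : ℕ) (hK : 0 < K) (m : ℕ) (hm : 0 < m) (snr : ℝ) (hsnr : 0 < snr)
    (d β : Fin K → Fin K → ℝ) (hd : ∀ k l, 0 < d k l) (hβ : ∀ k l, 0 < β k l)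
    (a : Fin K → ℝ) (ha : ∀ k, a k = 0 ∨ a k = 1) (k : Fin K)
    (G : Ω → ℝ) (E : Fin K → Ω → ℝ)
    (hGmeas : Measurable G) (hEmeas : ∀ l, Measurable (E l))
    (hG : Measure.map G ℙ = gammaMeasure m m)
    (hE : ∀ l, l ≠ k → Measure.map (E l) ℙ = expMeasure 1)
    (hindep : iIndepFun (Function.update E k G) ℙ) :
    (∫ ω, Real.logb 2 (1 + G ω * d k k ^ (-β k k) * a k /
        (∑ l ∈ univ.erase k, E l ω * d k l ^ (-β k l) * a l + 1 / snr))) =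
      Real.logb 2 (Real.exp 1) * a k *
        ∫ z in Ioi (0 : ℝ), Real.exp (-z / snr) / z *
          ((1 - (1 + z * d k k ^ (-β k k) / m) ^ (-(m : ℝ))) *
            ∏ l ∈ univ.erase k, (1 + z * d k l ^ (-β k l)) ^ (-a l)) :=
  stmt_3_general K m hm snr hsnr d β hd a ha k G E hGmeas hEmeas hG hE hindep
end
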